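/- arXiv:2308.04093 — 8 statements merged into one kernel-verified Lean document; each statement's English description precedes it below -/
import Mathlib

section
/- If two nonempty subsets A' ⊆ A and B' ⊆ B of items have equal total weight, and every item in B' has strictly higher efficiency (profit/weight ratio) than every item in A', and X is a set of items with A' ⊆ X and X ∩ B' = ∅, then the set (X ∪ B') \ A' has the same total weight as X but strictly larger total profit. -/
/-- If two nonempty subsets `A'` and `B'` of items have equal total weight, every item of
`B'` has strictly higher efficiency than every item of `A'`, `A' ⊆ X` and `X ∩ B' = ∅`,
then `(X ∪ B') \ A'` has the same total weight as `X` but strictly larger total profit. -/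
theorem exchange_same_weight_more_profit {ι : Type*} [DecidableEq ι]
    (w p : ι → ℕ) (hw : ∀ i, 0 < w i) (hp : ∀ i, 0 < p i)
    (A' B' X : Finset ι)
    (hA' : A'.Nonempty) (hB' : B'.Nonempty)
    (hdisj : Disjoint A' B')
    (hweq : ∑ i ∈ A', w i = ∑ i ∈ B', w i)
    (heff : ∀ j ∈ B', ∀ i ∈ A', (p j : ℚ) / (w j : ℚ) > (p i : ℚ) / (w i : ℚ))
    (hAX : A' ⊆ X) (hXB : Disjoint X B') :
    ∑ i ∈ (X ∪ B') \ A', w i = ∑ i ∈ X, w i ∧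
    ∑ i ∈ (X ∪ B') \ A', p i > ∑ i ∈ X, p i := by
  have hAXU : A' ⊆ X ∪ B' := hAX.trans Finset.subset_union_left
  have hsplit : ∀ f : ι → ℕ,
      ∑ i ∈ (X ∪ B') \ A', f i + ∑ i ∈ A', f i = ∑ i ∈ X, f i + ∑ i ∈ B', f i := by
    intro f
    rw [Finset.sum_sdiff hAXU, Finset.sum_union hXB]
  -- profit comparison: ∑ A' p < ∑ B' p
  have hPlt : ∑ i ∈ A', p i < ∑ i ∈ B', p i := by
    obtain ⟨i0, hi0, hmax⟩ := A'.exists_max_image (fun i => (p i : ℚ) / (w i : ℚ)) hA'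
    set r : ℚ := (p i0 : ℚ) / (w i0 : ℚ) with hr
    have hwq : ∀ i, (0:ℚ) < (w i : ℚ) := fun i => by exact_mod_cast hw i
    have hAle : ∀ i ∈ A', (p i : ℚ) ≤ r * w i := by
      intro i hi
      have := hmax i hi
      rw [div_le_iff₀ (hwq i)] at this
      linarith
    have hBgt : ∀ j ∈ B', r * w j < (p j : ℚ) := by
      intro j hj
      have := heff j hj i0 hi0
      rw [gt_iff_lt, lt_div_iff₀ (hwq j)] at this
      linarith
    have h1 : (∑ i ∈ A', (p i : ℚ)) ≤ ∑ i ∈ A', r * w i :=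
      Finset.sum_le_sum hAle
    have h2 : (∑ j ∈ B', r * w j) < ∑ j ∈ B', (p j : ℚ) :=
      Finset.sum_lt_sum_of_nonempty hB' hBgt
    have h3 : (∑ i ∈ A', r * w i) = ∑ j ∈ B', r * w j := by
      rw [← Finset.mul_sum, ← Finset.mul_sum, ← Nat.cast_sum, ← Nat.cast_sum, hweq]
    have : (∑ i ∈ A', (p i : ℚ)) < ∑ j ∈ B', (p j : ℚ) := by linarith
    exact_mod_cast (by push_cast at this ⊢; exact this : ((∑ i ∈ A', p i : ℕ) : ℚ) < ((∑ j ∈ B', p j : ℕ) : ℚ))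
  have h1 := hsplit w
  have h2 := hsplit p
  omega
end

section
/- For an optimal exchange solution (A,B) of a 0-1 knapsack instance, the weight multisets of A and B share no nonzero common subset sum: S*(wts(A)) ∩ S*(wts(B)) = ∅, where S*(X) denotes the set of sums of nonempty subsets of multiset X. -/
/-- The set of sums of nonempty sub-multisets of a multiset `X`. -/
def nonemptySubsetSums (X : Multiset ℕ) : Set ℕ :=
  {s | ∃ Y : Multiset ℕ, Y ≤ X ∧ Y ≠ 0 ∧ Y.sum = s}

lemma exists_of_le_map {α β : Type*} [DecidableEq β] {f : α → β} {s : Multiset α}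
    {Y : Multiset β} (h : Y ≤ s.map f) : ∃ t ≤ s, t.map f = Y := by
  induction s using Multiset.induction generalizing Y with
  | empty =>
    simp only [Multiset.map_zero, Multiset.le_zero] at h
    exact ⟨0, le_refl _, by simp [h]⟩
  | cons a s ih =>
    rw [Multiset.map_cons] at h
    by_cases hmem : f a ∈ Y
    · have h' : Y.erase (f a) ≤ s.map f := by
        have := Multiset.erase_le_erase (f a) h
        rwa [Multiset.erase_cons_head] at this
      obtain ⟨t, ht, hmap⟩ := ih h'
      exact ⟨a ::ₘ t, Multiset.cons_le_cons a ht, by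
        rw [Multiset.map_cons, hmap, Multiset.cons_erase hmem]⟩
    · rw [Multiset.le_cons_of_notMem hmem] at h
      obtain ⟨t, ht, hmap⟩ := ih h
      exact ⟨t, le_trans ht (Multiset.le_cons_self _ _), hmap⟩

/-- For an optimal exchange solution `(A, B)` of a 0-1 knapsack instance, the weight
multisets of `A` and `B` share no nonzero common subset sum. -/
theorem optimal_exchange_no_common_subset_sum
    (n : ℕ) (w p : Fin n → ℕ) (t : ℕ) (G : Finset (Fin n))
    (hw : ∀ i, 0 < w i) (hp : ∀ i, 0 < p i)
    -- distinct efficiencies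
    (heffdist : ∀ i j, i ≠ j → (p i : ℚ) / (w i : ℚ) ≠ (p j : ℚ) / (w j : ℚ))
    -- the greedy solution consists of the most efficient items:
    -- every item in `G` is strictly more efficient than every item outside `G`
    (hG : ∀ g ∈ G, ∀ i, i ∉ G → (p g : ℚ) / (w g : ℚ) > (p i : ℚ) / (w i : ℚ))
    (hGfeas : ∑ i ∈ G, w i ≤ t)
    (A B : Finset (Fin n))
    (hA : ∀ i ∈ A, i ∉ G) (hB : B ⊆ G)
    (hfeas : (∑ i ∈ A, (w i : ℤ)) - ∑ i ∈ B, (w i : ℤ) ≤ (t : ℤ) - ∑ i ∈ G, (w i : ℤ))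
    -- optimality: `(A, B)` maximizes `P(A') - P(B')` among all exchange solutions
    (hopt : ∀ A' B' : Finset (Fin n), (∀ i ∈ A', i ∉ G) → B' ⊆ G →
      (∑ i ∈ A', (w i : ℤ)) - ∑ i ∈ B', (w i : ℤ) ≤ (t : ℤ) - ∑ i ∈ G, (w i : ℤ) →
      (∑ i ∈ A', (p i : ℤ)) - ∑ i ∈ B', (p i : ℤ) ≤
        (∑ i ∈ A, (p i : ℤ)) - ∑ i ∈ B, (p i : ℤ)) :
    nonemptySubsetSums (A.val.map w) ∩ nonemptySubsetSums (B.val.map w) = ∅ := by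
  ext s
  simp only [Set.mem_inter_iff, Set.mem_empty_iff_false, iff_false]
  rintro ⟨⟨Y, hYle, hYne, hYsum⟩, ⟨Z, hZle, hZne, hZsum⟩⟩
  -- extract sub-finsets A₀ ⊆ A, B₀ ⊆ B
  obtain ⟨tA, htA, htAmap⟩ := exists_of_le_map hYle
  obtain ⟨tB, htB, htBmap⟩ := exists_of_le_map hZle
  set A₀ : Finset (Fin n) := ⟨tA, Multiset.nodup_of_le htA A.nodup⟩ with hA₀
  set B₀ : Finset (Fin n) := ⟨tB, Multiset.nodup_of_le htB B.nodup⟩ with hB₀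
  have hA₀sub : A₀ ⊆ A := Finset.val_le_iff.mp htA
  have hB₀sub : B₀ ⊆ B := Finset.val_le_iff.mp htB
  have hA₀sum : ∑ i ∈ A₀, w i = s := by
    rw [Finset.sum]; show (tA.map w).sum = s; rw [htAmap, hYsum]
  have hB₀sum : ∑ i ∈ B₀, w i = s := by
    rw [Finset.sum]; show (tB.map w).sum = s; rw [htBmap, hZsum]
  have hA₀ne : A₀.Nonempty := by
    rw [Finset.nonempty_iff_ne_empty]
    intro h
    apply hYne
    rw [← htAmap]
    have : tA = 0 := by simpa [hA₀] using congrArg Finset.val h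
    simp [this]
  have hB₀ne : B₀.Nonempty := by
    rw [Finset.nonempty_iff_ne_empty]
    intro h
    apply hZne
    rw [← htBmap]
    have : tB = 0 := by simpa [hB₀] using congrArg Finset.val h
    simp [this]
  -- apply optimality with A \ A₀, B \ B₀
  have hwA : ∑ i ∈ A \ A₀, (w i : ℤ) = (∑ i ∈ A, (w i : ℤ)) - ∑ i ∈ A₀, (w i : ℤ) :=
    Finset.sum_sdiff_eq_sub hA₀sub
  have hwB : ∑ i ∈ B \ B₀, (w i : ℤ) = (∑ i ∈ B, (w i : ℤ)) - ∑ i ∈ B₀, (w i : ℤ) :=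
    Finset.sum_sdiff_eq_sub hB₀sub
  have hpA : ∑ i ∈ A \ A₀, (p i : ℤ) = (∑ i ∈ A, (p i : ℤ)) - ∑ i ∈ A₀, (p i : ℤ) :=
    Finset.sum_sdiff_eq_sub hA₀sub
  have hpB : ∑ i ∈ B \ B₀, (p i : ℤ) = (∑ i ∈ B, (p i : ℤ)) - ∑ i ∈ B₀, (p i : ℤ) :=
    Finset.sum_sdiff_eq_sub hB₀sub
  have hws : ∑ i ∈ A₀, (w i : ℤ) = ∑ i ∈ B₀, (w i : ℤ) := by
    have h1 : ∑ i ∈ A₀, (w i : ℤ) = (s : ℤ) := by exact_mod_cast congrArg (Nat.cast : ℕ → ℤ) hA₀sum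
    have h2 : ∑ i ∈ B₀, (w i : ℤ) = (s : ℤ) := by exact_mod_cast congrArg (Nat.cast : ℕ → ℤ) hB₀sum
    rw [h1, h2]
  have hkey := hopt (A \ A₀) (B \ B₀)
    (fun i hi => hA i (Finset.mem_sdiff.mp hi).1)
    (fun i hi => hB (Finset.mem_sdiff.mp hi).1)
    (by rw [hwA, hwB, hws]; linarith)
  rw [hpA, hpB] at hkey
  have hple : ∑ i ∈ B₀, (p i : ℤ) ≤ ∑ i ∈ A₀, (p i : ℤ) := by linarith
  -- efficiency contradiction
  obtain ⟨g, hgB₀, hgmin⟩ := B₀.exists_min_image (fun i => (p i : ℚ) / (w i : ℚ)) hB₀ne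
  have hgG : g ∈ G := hB (hB₀sub hgB₀)
  have hwQ : ∀ i : Fin n, (0:ℚ) < (w i : ℚ) := fun i => by exact_mod_cast hw i
  -- ∑_{A₀} p < eff g * s
  have h1 : ∑ i ∈ A₀, (p i : ℚ) < ((p g : ℚ) / (w g : ℚ)) * (s : ℚ) := by
    have : ∑ i ∈ A₀, (p i : ℚ) < ∑ i ∈ A₀, ((p g : ℚ) / (w g : ℚ)) * (w i : ℚ) := by
      apply Finset.sum_lt_sum_of_nonempty hA₀ne
      intro i hi
      have heff : (p i : ℚ) / (w i : ℚ) < (p g : ℚ) / (w g : ℚ) :=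
        hG g hgG i (hA i (hA₀sub hi))
      calc (p i : ℚ) = ((p i : ℚ) / (w i : ℚ)) * (w i : ℚ) := by
            rw [div_mul_cancel₀]; exact ne_of_gt (hwQ i)
        _ < ((p g : ℚ) / (w g : ℚ)) * (w i : ℚ) := by
            exact mul_lt_mul_of_pos_right heff (hwQ i)
    calc ∑ i ∈ A₀, (p i : ℚ) < ∑ i ∈ A₀, ((p g : ℚ) / (w g : ℚ)) * (w i : ℚ) := this
      _ = ((p g : ℚ) / (w g : ℚ)) * (s : ℚ) := by
          rw [← Finset.mul_sum, ← hA₀sum]; push_cast; ring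
  -- eff g * s ≤ ∑_{B₀} p
  have h2 : ((p g : ℚ) / (w g : ℚ)) * (s : ℚ) ≤ ∑ i ∈ B₀, (p i : ℚ) := by
    have : ∑ i ∈ B₀, ((p g : ℚ) / (w g : ℚ)) * (w i : ℚ) ≤ ∑ i ∈ B₀, (p i : ℚ) := by
      apply Finset.sum_le_sum
      intro i hi
      calc ((p g : ℚ) / (w g : ℚ)) * (w i : ℚ)
          ≤ ((p i : ℚ) / (w i : ℚ)) * (w i : ℚ) :=
            mul_le_mul_of_nonneg_right (hgmin i hi) (le_of_lt (hwQ i))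
        _ = (p i : ℚ) := by rw [div_mul_cancel₀]; exact ne_of_gt (hwQ i)
    calc ((p g : ℚ) / (w g : ℚ)) * (s : ℚ)
        = ∑ i ∈ B₀, ((p g : ℚ) / (w g : ℚ)) * (w i : ℚ) := by
          rw [← Finset.mul_sum, ← hB₀sum]; push_cast; ring
      _ ≤ ∑ i ∈ B₀, (p i : ℚ) := this
  have hcontra : ∑ i ∈ A₀, (p i : ℚ) < ∑ i ∈ B₀, (p i : ℚ) := lt_of_lt_of_le h1 h2
  have hpleQ : ∑ i ∈ B₀, (p i : ℚ) ≤ ∑ i ∈ A₀, (p i : ℚ) := by exact_mod_cast hple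
  linarith
end

section
/- For any optimal exchange solution (A,B) of a 0-1 knapsack instance with maximum item weight w_max, |A| + |B| ≤ 2·w_max. -/
open Finset

/-- Pigeonhole lemma: if `A` and `B` have no common nonzero subset sum and
`W(A) < W(B) + wmax`, then `|A| ≤ wmax`. -/
lemma no_common_card_le {n : ℕ} (w : Fin n → ℕ) (wmax : ℕ)
    (hw : ∀ i, 0 < w i) (hwmax : ∀ i, w i ≤ wmax)
    (A B : Finset (Fin n))
    (hsum : ∑ i ∈ A, w i < ∑ i ∈ B, w i + wmax)
    (hnc : ∀ A' ⊆ A, ∀ B' ⊆ B, A'.Nonempty → ∑ i ∈ A', w i = ∑ i ∈ B', w i → False) :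
    A.card ≤ wmax := by
  by_contra hcard
  push_neg at hcard
  set S : Fin n → ℕ := fun x => ∑ a ∈ A.filter (· ≤ x), w a with hSdef
  set T : Fin n → ℕ := fun y => ∑ b ∈ B.filter (· ≤ y), w b with hTdef
  set M : ℕ → ℕ := fun c => ∑ y ∈ B.filter (fun y => T y ≤ c), w y with hMdef
  have hMle : ∀ c, M c ≤ c := by
    intro c
    by_cases hP : (B.filter (fun y => T y ≤ c)).Nonempty
    · set P := B.filter (fun y => T y ≤ c) with hPdef
      have hy : P.max' hP ∈ P := P.max'_mem hP
      have h1 : M c ≤ T (P.max' hP) := by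
        apply sum_le_sum_of_subset
        intro y hy'
        exact mem_filter.2 ⟨(mem_filter.1 hy').1, le_max' _ _ hy'⟩
      have h2 : T (P.max' hP) ≤ c := (mem_filter.1 hy).2
      exact h1.trans h2
    · rw [not_nonempty_iff_eq_empty] at hP
      simp [hMdef, hP]
  have hMlt : ∀ c, c < ∑ i ∈ B, w i + wmax → c < M c + wmax := by
    intro c hc
    by_cases hQ : (B.filter (fun y => ¬ T y ≤ c)).Nonempty
    · set y0 := (B.filter (fun y => ¬ T y ≤ c)).min' hQ with hy0def
      have hy0 : y0 ∈ B ∧ ¬ T y0 ≤ c := mem_filter.1 (min'_mem _ hQ)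
      have hins : B.filter (· ≤ y0) = insert y0 (B.filter (· < y0)) := by
        ext y
        simp only [mem_filter, mem_insert]
        constructor
        · rintro ⟨hyB, hyle⟩
          rcases eq_or_lt_of_le hyle with h | h
          · exact Or.inl h
          · exact Or.inr ⟨hyB, h⟩
        · rintro (rfl | ⟨hyB, hylt⟩)
          · exact ⟨hy0.1, le_refl _⟩
          · exact ⟨hyB, hylt.le⟩
      have hTy0 : T y0 = w y0 + ∑ y ∈ B.filter (· < y0), w y := by
        show ∑ b ∈ B.filter (· ≤ y0), w b = _
        rw [hins, sum_insert (by simp)]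
      have hsub : B.filter (· < y0) ⊆ B.filter (fun y => T y ≤ c) := by
        intro y hy
        obtain ⟨hyB, hylt⟩ := mem_filter.1 hy
        refine mem_filter.2 ⟨hyB, ?_⟩
        by_contra hnot
        exact absurd hylt (not_lt.2 (min'_le _ y (mem_filter.2 ⟨hyB, hnot⟩)))
      have hle := sum_le_sum_of_subset (f := w) hsub
      have hw0 := hwmax y0
      have hc' : c < T y0 := not_le.1 hy0.2
      have : (∑ y ∈ B.filter (· < y0), w y) ≤ M c := hle
      omega
    · rw [not_nonempty_iff_eq_empty] at hQ
      have hall : B.filter (fun y => T y ≤ c) = B := by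
        apply filter_eq_self.2
        intro y hy
        by_contra h
        have hmem : y ∈ B.filter (fun y => ¬ T y ≤ c) := mem_filter.2 ⟨hy, h⟩
        rw [hQ] at hmem
        exact absurd hmem (Finset.notMem_empty y)
      have : M c = ∑ i ∈ B, w i := by rw [hMdef]; simp only; rw [hall]
      omega
  have hMmono : ∀ c1 c2, c1 ≤ c2 → M c1 ≤ M c2 := by
    intro c1 c2 h
    apply sum_le_sum_of_subset
    intro y hy
    exact mem_filter.2 ⟨(mem_filter.1 hy).1, le_trans (mem_filter.1 hy).2 h⟩
  have hSA : ∀ x ∈ A, S x < ∑ i ∈ B, w i + wmax := by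
    intro x hx
    calc S x ≤ ∑ i ∈ A, w i := sum_le_sum_of_subset (filter_subset _ _)
    _ < _ := hsum
  have key : ∀ x1 ∈ A, ∀ x2 ∈ A, x1 < x2 →
      S x1 - M (S x1) = S x2 - M (S x2) → False := by
    intro x1 hx1 x2 hx2 hlt hDeq
    have hsub12 : A.filter (· ≤ x1) ⊆ A.filter (· ≤ x2) := by
      intro a ha
      exact mem_filter.2 ⟨(mem_filter.1 ha).1, le_trans (mem_filter.1 ha).2 hlt.le⟩
    have hS12 : S x1 < S x2 := by
      apply sum_lt_sum_of_subset hsub12 (i := x2)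
        (mem_filter.2 ⟨hx2, le_refl _⟩)
        (by simp [not_le.2 hlt]) (hw x2) (fun j _ _ => Nat.zero_le _)
    have hm1 := hMle (S x1)
    have hm2 := hMle (S x2)
    have hmono := hMmono _ _ hS12.le
    have hlt1 := hMlt (S x1) (hSA x1 hx1)
    set A' := A.filter (fun a => x1 < a ∧ a ≤ x2) with hA'def
    set B' := B.filter (fun y => S x1 < T y ∧ T y ≤ S x2) with hB'def
    have hApart : A.filter (· ≤ x1) ∪ A' = A.filter (· ≤ x2) := by
      ext a
      simp only [hA'def, mem_union, mem_filter]
      constructor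
      · rintro (⟨ha, h1⟩ | ⟨ha, _, h2⟩)
        · exact ⟨ha, h1.trans hlt.le⟩
        · exact ⟨ha, h2⟩
      · rintro ⟨ha, h2⟩
        rcases le_or_gt a x1 with h | h
        · exact Or.inl ⟨ha, h⟩
        · exact Or.inr ⟨ha, h, h2⟩
    have hAdisj : Disjoint (A.filter (· ≤ x1)) A' := by
      rw [disjoint_left]
      intro a ha ha'
      exact absurd (mem_filter.1 ha).2 (not_le.2 (mem_filter.1 ha').2.1)
    have hA'sum : S x1 + ∑ a ∈ A', w a = S x2 := by
      show S x1 + _ = ∑ a ∈ A.filter (· ≤ x2), w a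
      rw [← hApart, sum_union hAdisj]
    have hBpart : B.filter (fun y => T y ≤ S x1) ∪ B' = B.filter (fun y => T y ≤ S x2) := by
      ext y
      simp only [hB'def, mem_union, mem_filter]
      constructor
      · rintro (⟨hy, h1⟩ | ⟨hy, _, h2⟩)
        · exact ⟨hy, h1.trans hS12.le⟩
        · exact ⟨hy, h2⟩
      · rintro ⟨hy, h2⟩
        rcases le_or_gt (T y) (S x1) with h | h
        · exact Or.inl ⟨hy, h⟩
        · exact Or.inr ⟨hy, h, h2⟩
    have hBdisj : Disjoint (B.filter (fun y => T y ≤ S x1)) B' := by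
      rw [disjoint_left]
      intro y hy hy'
      exact absurd (mem_filter.1 hy).2 (not_le.2 (mem_filter.1 hy').2.1)
    have hB'sum : M (S x1) + ∑ y ∈ B', w y = M (S x2) := by
      show (∑ y ∈ B.filter (fun y => T y ≤ S x1), w y) + _ =
        ∑ y ∈ B.filter (fun y => T y ≤ S x2), w y
      rw [← hBpart, sum_union hBdisj]
    apply hnc A' (filter_subset _ _) B' (filter_subset _ _)
    · exact ⟨x2, mem_filter.2 ⟨hx2, hlt, le_refl _⟩⟩
    · omega
  have hmaps : ∀ x ∈ A, S x - M (S x) ∈ Finset.range wmax := by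
    intro x hx
    have h1 := hMlt (S x) (hSA x hx)
    have h2 := hMle (S x)
    simp only [Finset.mem_range]
    omega
  obtain ⟨x1, hx1, x2, hx2, hne, hDeq⟩ :=
    Finset.exists_ne_map_eq_of_card_lt_of_maps_to (by simpa using hcard) hmaps
  rcases hne.lt_or_gt with h | h
  · exact key x1 hx1 x2 hx2 h hDeq
  · exact key x2 hx2 x1 hx1 h hDeq.symm

/-- For any optimal exchange solution `(A, B)` of a 0-1 knapsack instance with maximum
item weight `wmax`, we have `|A| + |B| ≤ 2 * wmax`. -/
theorem optimal_exchange_card_bound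
    (n : ℕ) (w p : Fin n → ℕ) (t wmax : ℕ) (G : Finset (Fin n))
    (hw : ∀ i, 0 < w i) (hwmax : ∀ i, w i ≤ wmax) (hp : ∀ i, 0 < p i)
    -- distinct efficiencies
    (heffdist : ∀ i j, i ≠ j → (p i : ℚ) / (w i : ℚ) ≠ (p j : ℚ) / (w j : ℚ))
    -- the greedy solution consists of the most efficient items
    (hG : ∀ g ∈ G, ∀ i, i ∉ G → (p g : ℚ) / (w g : ℚ) > (p i : ℚ) / (w i : ℚ))
    (hGfeas : ∑ i ∈ G, w i ≤ t)
    (A B : Finset (Fin n))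
    (hA : ∀ i ∈ A, i ∉ G) (hB : B ⊆ G)
    (hfeas : (∑ i ∈ A, (w i : ℤ)) - ∑ i ∈ B, (w i : ℤ) ≤ (t : ℤ) - ∑ i ∈ G, (w i : ℤ))
    -- optimality
    (hopt : ∀ A' B' : Finset (Fin n), (∀ i ∈ A', i ∉ G) → B' ⊆ G →
      (∑ i ∈ A', (w i : ℤ)) - ∑ i ∈ B', (w i : ℤ) ≤ (t : ℤ) - ∑ i ∈ G, (w i : ℤ) →
      (∑ i ∈ A', (p i : ℤ)) - ∑ i ∈ B', (p i : ℤ) ≤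
        (∑ i ∈ A, (p i : ℤ)) - ∑ i ∈ B, (p i : ℤ))
    -- proximity facts about the weights: 0 ≤ W(A) - W(B) < wmax
    (hlow : (0 : ℤ) ≤ (∑ i ∈ A, (w i : ℤ)) - ∑ i ∈ B, (w i : ℤ))
    (hhigh : (∑ i ∈ A, (w i : ℤ)) - ∑ i ∈ B, (w i : ℤ) < (wmax : ℤ)) :
    A.card + B.card ≤ 2 * wmax := by
  -- Step 1: no common nonzero subset sum
  have hnc : ∀ A' ⊆ A, ∀ B' ⊆ B, A'.Nonempty → ∑ i ∈ A', w i = ∑ i ∈ B', w i → False := by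
    intro A' hA' B' hB' hne hsum
    have hA'pos : 0 < ∑ i ∈ A', w i := Finset.sum_pos (fun i _ => hw i) hne
    have hB'ne : B'.Nonempty := by
      by_contra hB'e
      rw [Finset.not_nonempty_iff_eq_empty] at hB'e
      rw [hB'e, Finset.sum_empty] at hsum
      omega
    have hZ : (∑ i ∈ A', (w i : ℤ)) = ∑ i ∈ B', (w i : ℤ) := by exact_mod_cast hsum
    have hsA : ∑ i ∈ A \ A', (w i : ℤ) = ∑ i ∈ A, (w i : ℤ) - ∑ i ∈ A', (w i : ℤ) := by
      rw [eq_sub_iff_add_eq, Finset.sum_sdiff hA']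
    have hsB : ∑ i ∈ B \ B', (w i : ℤ) = ∑ i ∈ B, (w i : ℤ) - ∑ i ∈ B', (w i : ℤ) := by
      rw [eq_sub_iff_add_eq, Finset.sum_sdiff hB']
    have hpA : ∑ i ∈ A \ A', (p i : ℤ) = ∑ i ∈ A, (p i : ℤ) - ∑ i ∈ A', (p i : ℤ) := by
      rw [eq_sub_iff_add_eq, Finset.sum_sdiff hA']
    have hpB : ∑ i ∈ B \ B', (p i : ℤ) = ∑ i ∈ B, (p i : ℤ) - ∑ i ∈ B', (p i : ℤ) := by
      rw [eq_sub_iff_add_eq, Finset.sum_sdiff hB']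
    have hfeas' : (∑ i ∈ A \ A', (w i : ℤ)) - ∑ i ∈ B \ B', (w i : ℤ) ≤
        (t : ℤ) - ∑ i ∈ G, (w i : ℤ) := by
      rw [hsA, hsB]; linarith
    have hle := hopt (A \ A') (B \ B')
      (fun i hi => hA i (Finset.mem_sdiff.1 hi).1)
      ((Finset.sdiff_subset).trans hB) hfeas'
    rw [hpA, hpB] at hle
    have hBleA : (∑ i ∈ B', (p i : ℤ)) ≤ ∑ i ∈ A', (p i : ℤ) := by linarith
    -- Strict profit inequality from efficiencies
    obtain ⟨b0, hb0B', hb0min⟩ := B'.exists_min_image (fun b => (p b : ℚ) / (w b : ℚ)) hB'ne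
    have hb0G : b0 ∈ G := hB' hb0B' |> hB
    have hwsumQ : (∑ i ∈ A', (w i : ℚ)) = ∑ i ∈ B', (w i : ℚ) := by exact_mod_cast hsum
    have hltQ : (∑ i ∈ A', (p i : ℚ)) < ∑ i ∈ B', (p i : ℚ) := by
      calc (∑ i ∈ A', (p i : ℚ))
          < ∑ i ∈ A', ((p b0 : ℚ) / (w b0 : ℚ)) * (w i : ℚ) := by
            apply Finset.sum_lt_sum_of_nonempty hne
            intro a ha
            have haG : a ∉ G := hA a (hA' ha)
            have heff := hG b0 hb0G a haG
            have hwa : (0 : ℚ) < (w a : ℚ) := by exact_mod_cast hw a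
            have hrw : (p a : ℚ) = ((p a : ℚ) / (w a : ℚ)) * (w a : ℚ) := by
              field_simp
            rw [hrw]
            exact mul_lt_mul_of_pos_right heff hwa
        _ = ((p b0 : ℚ) / (w b0 : ℚ)) * ∑ i ∈ A', (w i : ℚ) := by rw [Finset.mul_sum]
        _ = ((p b0 : ℚ) / (w b0 : ℚ)) * ∑ i ∈ B', (w i : ℚ) := by rw [hwsumQ]
        _ = ∑ i ∈ B', ((p b0 : ℚ) / (w b0 : ℚ)) * (w i : ℚ) := by rw [Finset.mul_sum]
        _ ≤ ∑ i ∈ B', (p i : ℚ) := by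
            apply Finset.sum_le_sum
            intro b hb
            have hwb : (0 : ℚ) ≤ (w b : ℚ) := by positivity
            calc ((p b0 : ℚ) / (w b0 : ℚ)) * (w b : ℚ)
                ≤ ((p b : ℚ) / (w b : ℚ)) * (w b : ℚ) :=
                  mul_le_mul_of_nonneg_right (hb0min b hb) hwb
              _ = (p b : ℚ) := by
                  have : (w b : ℚ) ≠ 0 := by
                    exact_mod_cast (hw b).ne'
                  field_simp
    have hltN : (∑ i ∈ A', p i) < ∑ i ∈ B', p i := by exact_mod_cast hltQ
    have hBleAN : (∑ i ∈ B', p i) ≤ ∑ i ∈ A', p i := by exact_mod_cast hBleA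
    omega
  -- Step 2: apply pigeonhole lemma to both A and B
  have hWA : (((∑ i ∈ A, w i : ℕ)) : ℤ) < ((∑ i ∈ B, w i : ℕ) : ℤ) + wmax := by
    push_cast
    linarith
  have hWAN : ∑ i ∈ A, w i < ∑ i ∈ B, w i + wmax := by exact_mod_cast hWA
  have h1 : A.card ≤ wmax := no_common_card_le w wmax hw hwmax A B hWAN hnc
  have h2 : B.card ≤ wmax := by
    rcases B.eq_empty_or_nonempty with hBe | hBne
    · simp [hBe]
    · have hwmaxpos : 0 < wmax := lt_of_lt_of_le (hw hBne.choose) (hwmax hBne.choose)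
      have hWB : (((∑ i ∈ B, w i : ℕ)) : ℤ) < ((∑ i ∈ A, w i : ℕ) : ℤ) + wmax := by
        push_cast
        have : (0:ℤ) < wmax := by exact_mod_cast hwmaxpos
        linarith
      have hWBN : ∑ i ∈ B, w i < ∑ i ∈ A, w i + wmax := by exact_mod_cast hWB
      apply no_common_card_le w wmax hw hwmax B A hWBN
      intro B' hB' A' hA' hne heq
      have hpos : 0 < ∑ i ∈ B', w i := Finset.sum_pos (fun i _ => hw i) hne
      have hA'ne : A'.Nonempty := by
        by_contra hA'e
        rw [Finset.not_nonempty_iff_eq_empty] at hA'e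
        rw [hA'e, Finset.sum_empty] at heq
        omega
      exact hnc A' hA' B' hB' hA'ne heq.symm
  omega
end

section
/- Prefix property: in any optimal exchange solution (A,B), if item i of weight w is in A, then every item i' outside the greedy solution with the same weight w and strictly higher profit than i is also in A; consequently the rank of every item in A is at most 2·w_max. -/
/-- Prefix property: in any optimal exchange solution `(A, B)`, if item `i` is in `A`, then
every item outside the greedy solution with the same weight and strictly higher profit is
also in `A`; consequently the rank of every item of `A` (its position in its weight class
outside `G`, by decreasing profit) is at most `2 * wmax`. -/
theorem prefix_property
    (n : ℕ) (w p : Fin n → ℕ) (t wmax : ℕ) (G : Finset (Fin n))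
    (hw : ∀ i, 0 < w i) (hwmax : ∀ i, w i ≤ wmax) (hp : ∀ i, 0 < p i)
    -- distinct profits and distinct efficiencies
    (hpdist : Function.Injective p)
    (heffdist : ∀ i j, i ≠ j → (p i : ℚ) / (w i : ℚ) ≠ (p j : ℚ) / (w j : ℚ))
    -- the greedy solution consists of the most efficient items
    (hG : ∀ g ∈ G, ∀ i, i ∉ G → (p g : ℚ) / (w g : ℚ) > (p i : ℚ) / (w i : ℚ))
    (hGfeas : ∑ i ∈ G, w i ≤ t)
    (A B : Finset (Fin n))
    (hA : ∀ i ∈ A, i ∉ G) (hB : B ⊆ G)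
    (hfeas : (∑ i ∈ A, (w i : ℤ)) - ∑ i ∈ B, (w i : ℤ) ≤ (t : ℤ) - ∑ i ∈ G, (w i : ℤ))
    -- optimality
    (hopt : ∀ A' B' : Finset (Fin n), (∀ i ∈ A', i ∉ G) → B' ⊆ G →
      (∑ i ∈ A', (w i : ℤ)) - ∑ i ∈ B', (w i : ℤ) ≤ (t : ℤ) - ∑ i ∈ G, (w i : ℤ) →
      (∑ i ∈ A', (p i : ℤ)) - ∑ i ∈ B', (p i : ℤ) ≤
        (∑ i ∈ A, (p i : ℤ)) - ∑ i ∈ B, (p i : ℤ))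
    -- the proximity bound |A| ≤ 2 * wmax
    (hAcard : A.card ≤ 2 * wmax)
    (i : Fin n) (hiA : i ∈ A) :
    (∀ i', i' ∉ G → w i' = w i → p i' > p i → i' ∈ A) ∧
    (Finset.univ.filter (fun i' => i' ∉ G ∧ w i' = w i ∧ p i ≤ p i')).card ≤ 2 * wmax := by
  have part1 : ∀ i', i' ∉ G → w i' = w i → p i' > p i → i' ∈ A := by
    intro i' hi'G hwi hpi
    by_contra hi'A
    have hne : i' ≠ i := by rintro rfl; exact lt_irrefl _ hpi
    set A' : Finset (Fin n) := insert i' (A.erase i) with hA'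
    have hi'nmem : i' ∉ A.erase i := fun h => hi'A (Finset.mem_of_mem_erase h)
    have hwsum : (∑ j ∈ A', (w j : ℤ)) = ∑ j ∈ A, (w j : ℤ) := by
      rw [hA', Finset.sum_insert hi'nmem, ← Finset.add_sum_erase _ _ hiA]
      simp [hwi]
    have hpsum : (∑ j ∈ A', (p j : ℤ)) > ∑ j ∈ A, (p j : ℤ) := by
      rw [hA', Finset.sum_insert hi'nmem, ← Finset.add_sum_erase _ _ hiA]
      have : (p i : ℤ) < p i' := by exact_mod_cast hpi
      omega
    have hA'G : ∀ j ∈ A', j ∉ G := by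
      intro j hj
      rcases Finset.mem_insert.mp hj with rfl | hj
      · exact hi'G
      · exact hA j (Finset.mem_of_mem_erase hj)
    have := hopt A' B hA'G hB (by rw [hwsum]; exact hfeas)
    omega
  refine ⟨part1, ?_⟩
  have hsub : (Finset.univ.filter (fun i' => i' ∉ G ∧ w i' = w i ∧ p i ≤ p i')) ⊆ A := by
    intro i' hi'
    simp only [Finset.mem_filter] at hi'
    obtain ⟨-, hG', hw', hp'⟩ := hi'
    rcases lt_or_eq_of_le hp' with h | h
    · exact part1 i' hG' hw' h
    · have : i' = i := hpdist h.symm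
      exact this ▸ hiA
  exact le_trans (Finset.card_le_card hsub) hAcard
end

section
/- Solving the discrepancy recurrence: let b_0 = 2r·log₂(2m) and b_k = b_{k-1}/2 + √(b_{k-1}·ln(2m)) for 1 ≤ k ≤ log₂(r), where r is a power of two with r ≥ 2 and m ≥ 1. Then b_{log₂(r)} = O(log m); concretely, b_{log₂(r)} ≤ C·log(2m) for an absolute constant C. -/
set_option maxHeartbeats 1600000 in
/-- Solving the discrepancy recurrence: with `b 0 = 2r·log₂(2m)` and
`b k = b (k-1) / 2 + √(b (k-1) · ln(2m))` for `1 ≤ k ≤ log₂ r`, where `r = 2^K ≥ 2` is a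
power of two and `m ≥ 1`, the final value satisfies `b (log₂ r) ≤ C · log(2m)` for an
absolute constant `C`. -/
theorem discrepancy_recurrence_bound :
    ∃ C : ℝ, 0 < C ∧
      ∀ (r m K : ℕ) (b : ℕ → ℝ),
        2 ≤ r → r = 2 ^ K → 1 ≤ m →
        b 0 = 2 * (r : ℝ) * Real.logb 2 (2 * (m : ℝ)) →
        (∀ k : ℕ, 1 ≤ k → k ≤ K →
          b k = b (k - 1) / 2 + Real.sqrt (b (k - 1) * Real.log (2 * (m : ℝ)))) →
        b K ≤ C * Real.log (2 * (m : ℝ)) := by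
  refine ⟨76, by norm_num, ?_⟩
  intro r m K b hr hrK hm hb0 hrec
  set L := Real.log (2 * (m : ℝ)) with hLdef
  have hm1 : (1:ℝ) ≤ (m:ℝ) := by exact_mod_cast hm
  have hlog2 : (0.6931471803 : ℝ) < Real.log 2 := Real.log_two_gt_d9
  have hL2 : Real.log 2 ≤ L := by
    apply Real.log_le_log (by norm_num)
    linarith
  have hL0 : 0 < L := by linarith
  clear_value L
  have hs2 : Real.sqrt 2 ≤ 3/2 := by
    nlinarith [Real.sq_sqrt (by norm_num : (0:ℝ) ≤ 2), Real.sqrt_nonneg 2]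
  have key : ∀ k, k ≤ K →
      b k ≤ L * (8 * 2 ^ (K - k) + 64 * Real.sqrt (2 ^ (K - k)) + 4) := by
    intro k
    induction k with
    | zero =>
      intro _
      have hrR : (r:ℝ) = 2 ^ K := by rw [hrK]; push_cast; ring
      rw [hb0, Real.logb, hrR, ← hLdef]
      have h1 : (0:ℝ) < 2 ^ K := by positivity
      have h2 : 0 ≤ Real.sqrt ((2:ℝ) ^ (K - 0)) := Real.sqrt_nonneg _
      simp only [Nat.sub_zero] at h2 ⊢
      have hdiv : L / Real.log 2 ≤ 2 * L := by
        rw [div_le_iff₀ (by linarith)]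
        nlinarith
      have h3 : 2 * (2:ℝ)^K * (L / Real.log 2) ≤ 2 * (2:ℝ)^K * (2 * L) := by
        apply mul_le_mul_of_nonneg_left hdiv (by positivity)
      nlinarith [mul_pos h1 hL0, mul_nonneg h2 hL0.le]
    | succ k ih =>
      intro hk
      have hk' : k ≤ K := by omega
      have hsub : K - k = (K - (k+1)) + 1 := by omega
      set n := K - (k + 1) with hn
      set t : ℝ := 2 ^ n with ht
      set s : ℝ := Real.sqrt t with hs
      have ht1 : (1:ℝ) ≤ t := one_le_pow₀ (by norm_num)
      have hs1 : 1 ≤ s := by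
        rw [hs, show (1:ℝ) = Real.sqrt 1 by simp]
        exact Real.sqrt_le_sqrt ht1
      have hst : s * s = t := Real.mul_self_sqrt (by positivity)
      have hpow : (2:ℝ) ^ (K - k) = 2 * t := by rw [hsub]; ring
      have hsq2t : Real.sqrt ((2:ℝ) ^ (K - k)) = Real.sqrt 2 * s := by
        rw [hpow, Real.sqrt_mul (by norm_num), hs]
      have ihk := ih hk'
      rw [hsq2t, hpow] at ihk
      have hsgoal : Real.sqrt ((2:ℝ) ^ (K - (k+1))) = s := by rw [hs, ht, hn]
      have htgoal : (2:ℝ) ^ (K - (k+1)) = t := by rw [ht, hn]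
      clear_value s t n
      set X : ℝ := 8 * (2 * t) + 64 * (Real.sqrt 2 * s) + 4 with hX
      clear_value X
      have hbk : b (k+1) = b k / 2 + Real.sqrt (b k * L) := by
        have h := hrec (k+1) (by omega) hk
        simpa using h
      have hXb : X ≤ 121 * (s * s) := by
        rw [hX, hst]
        nlinarith [hs1, hs2, Real.sqrt_nonneg (2:ℝ)]
      have hXnn : 0 ≤ X := by rw [hX]; nlinarith [hs1, hs2, Real.sqrt_nonneg (2:ℝ), ht1]
      have h11 : Real.sqrt (b k * L) ≤ L * (11 * s) := by
        have hnn : 0 ≤ L * (11 * s) :=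
          mul_nonneg hL0.le (by linarith)
        have harg : b k * L ≤ (L * (11 * s))^2 := by
          have h1 : b k * L ≤ (L * X) * L :=
            mul_le_mul_of_nonneg_right ihk hL0.le
          have h2 : X * (L * L) ≤ (121 * (s*s)) * (L * L) :=
            mul_le_mul_of_nonneg_right hXb (mul_nonneg hL0.le hL0.le)
          have h3 : (L * (11 * s))^2 = (121 * (s*s)) * (L * L) := by ring
          have h4 : (L * X) * L = X * (L * L) := by ring
          linarith
        calc Real.sqrt (b k * L) ≤ Real.sqrt ((L * (11 * s))^2) :=
              Real.sqrt_le_sqrt harg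
          _ = L * (11 * s) := Real.sqrt_sq hnn
      have hfin : X / 2 + 11 * s ≤ 8 * t + 64 * s + 4 := by
        rw [hX]
        nlinarith [hs1, hs2, Real.sqrt_nonneg (2:ℝ)]
      have hgoal : L * (X / 2) + L * (11 * s) ≤ L * (8 * t + 64 * s + 4) := by
        nlinarith [mul_le_mul_of_nonneg_left hfin hL0.le]
      calc b (k+1) = b k / 2 + Real.sqrt (b k * L) := hbk
        _ ≤ (L * X) / 2 + L * (11 * s) := by linarith [h11, ihk]
        _ = L * (X / 2) + L * (11 * s) := by ring
        _ ≤ L * (8 * t + 64 * s + 4) := hgoal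
  have hK := key K le_rfl
  simp only [Nat.sub_self, pow_zero, Real.sqrt_one] at hK
  linarith
end

section
/- Pessimistic estimator step: let b ≥ 1 and define p(x) = (x(b−x) + C(b−x, 2))/b² for 0 ≤ x ≤ b. Then for all 0 ≤ x ≤ b−1: (x/b²)·1 + (1 − x/b²)·p(x+1) − p(x) = −x(b+x)(b−x−1)/(2b⁴) ≤ 0. -/
/-- The pessimistic estimator `p(x) = (x(b−x) + C(b−x,2))/b²`. -/
def pessimisticEstimator (b : ℕ) (x : ℚ) : ℚ :=
  (x * ((b : ℚ) - x) + ((b : ℚ) - x) * ((b : ℚ) - x - 1) / 2) / (b : ℚ) ^ 2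

/-- Pessimistic estimator step: for `1 ≤ b` and `0 ≤ x ≤ b − 1`,
`(x/b²)·1 + (1 − x/b²)·p(x+1) − p(x) = −x(b+x)(b−x−1)/(2b⁴) ≤ 0`. -/
theorem pessimistic_estimator_step (b x : ℕ) (hb : 1 ≤ b) (hx : x < b) :
    ((x : ℚ) / (b : ℚ) ^ 2) * 1 +
        (1 - (x : ℚ) / (b : ℚ) ^ 2) * pessimisticEstimator b ((x : ℚ) + 1) -
        pessimisticEstimator b (x : ℚ) =
      -((x : ℚ) * ((b : ℚ) + (x : ℚ)) * ((b : ℚ) - (x : ℚ) - 1)) / (2 * (b : ℚ) ^ 4) ∧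
    ((x : ℚ) / (b : ℚ) ^ 2) * 1 +
        (1 - (x : ℚ) / (b : ℚ) ^ 2) * pessimisticEstimator b ((x : ℚ) + 1) -
        pessimisticEstimator b (x : ℚ) ≤ 0 := by
  have hb0 : (b : ℚ) ≠ 0 := by positivity
  have heq : ((x : ℚ) / (b : ℚ) ^ 2) * 1 +
        (1 - (x : ℚ) / (b : ℚ) ^ 2) * pessimisticEstimator b ((x : ℚ) + 1) -
        pessimisticEstimator b (x : ℚ) =
      -((x : ℚ) * ((b : ℚ) + (x : ℚ)) * ((b : ℚ) - (x : ℚ) - 1)) / (2 * (b : ℚ) ^ 4) := by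
    unfold pessimisticEstimator
    field_simp
    ring
  refine ⟨heq, heq ▸ ?_⟩
  have hxb : (x : ℚ) + 1 ≤ (b : ℚ) := by exact_mod_cast hx
  apply div_nonpos_of_nonpos_of_nonneg
  · simp only [neg_nonpos]
    have : (0:ℚ) ≤ (b : ℚ) - (x:ℚ) - 1 := by linarith
    positivity
  · positivity
end

section
/- Tie-breaking transformation preserves optimality: given items with weights w_i ≤ w_max and profits p_i, define p'_i = (p_i·M + i)·w_max + 1 where M = 1 + n + Σ_{i=1}^n i. Then for every item set S ⊆ [n], Σ_{i∈S} p_i = ⌊(Σ_{i∈S} p'_i)/(M·w_max)⌋; consequently any set maximizing Σ_{i∈S} p'_i subject to a weight constraint also maximizes Σ_{i∈S} p_i subject to the same constraint. -/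
/-- Tie-breaking transformation preserves optimality: with
`p' i = (p i · M + i) · wmax + 1` and `M = 1 + n + Σ_{i=1}^n i`, for every item set `S`,
`Σ_{i∈S} p i = ⌊(Σ_{i∈S} p' i) / (M · wmax)⌋`; consequently any set maximizing `Σ p'`
subject to a weight constraint also maximizes `Σ p` subject to the same constraint. -/
theorem tie_breaking_preserves_optimality
    (n : ℕ) (w p : Fin n → ℕ) (wmax t : ℕ)
    (hwmax : 1 ≤ wmax) (hw : ∀ i, 1 ≤ w i ∧ w i ≤ wmax) (hp : ∀ i, 1 ≤ p i)
    (M : ℕ) (hM : M = 1 + n + ∑ i ∈ Finset.Icc 1 n, i)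
    (p' : Fin n → ℕ) (hp' : ∀ i, p' i = (p i * M + (i.val + 1)) * wmax + 1) :
    (∀ S : Finset (Fin n), ∑ i ∈ S, p i = (∑ i ∈ S, p' i) / (M * wmax)) ∧
    (∀ S : Finset (Fin n),
      (∑ i ∈ S, w i ≤ t ∧
        ∀ S' : Finset (Fin n), ∑ i ∈ S', w i ≤ t → ∑ i ∈ S', p' i ≤ ∑ i ∈ S, p' i) →
      ∀ S' : Finset (Fin n), ∑ i ∈ S', w i ≤ t → ∑ i ∈ S', p i ≤ ∑ i ∈ S, p i) := by
  set T := ∑ i ∈ Finset.Icc 1 n, i with hT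
  have key : ∀ S : Finset (Fin n), ∑ i ∈ S, p i = (∑ i ∈ S, p' i) / (M * wmax) := by
    intro S
    have hsum : ∑ i ∈ S, p' i
        = M * wmax * (∑ i ∈ S, p i) + (wmax * (∑ i ∈ S, (i.val + 1)) + S.card) := by
      simp only [hp']
      rw [Finset.sum_add_distrib, ← Finset.sum_mul, Finset.sum_add_distrib, Finset.sum_const,
        smul_eq_mul, mul_one, ← Finset.sum_mul]
      ring
    have hle : ∑ i ∈ S, (i.val + 1) ≤ T := by
      have h1 : ∑ i ∈ S, (i.val + 1) ≤ ∑ i : Fin n, (i.val + 1) :=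
        Finset.sum_le_sum_of_subset (Finset.subset_univ S)
      have haux : ∀ m : ℕ, ∑ i ∈ Finset.range m, (i + 1) = ∑ i ∈ Finset.Icc 1 m, i := by
        intro m
        induction m with
        | zero => simp
        | succ k ih => rw [Finset.sum_range_succ, Finset.sum_Icc_succ_top (by omega), ih]
      have h2 : ∑ i : Fin n, (i.val + 1) = T := by
        rw [hT, Fin.sum_univ_eq_sum_range (fun i => i + 1) n, haux]
      omega
    have hcard : S.card ≤ n := by
      simpa using Finset.card_le_card (Finset.subset_univ S)
    have hrem : wmax * (∑ i ∈ S, (i.val + 1)) + S.card < M * wmax := by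
      have : wmax * (∑ i ∈ S, (i.val + 1)) ≤ wmax * T := Nat.mul_le_mul_left _ hle
      have hn : n ≤ wmax * n := Nat.le_mul_of_pos_left _ hwmax
      calc wmax * (∑ i ∈ S, (i.val + 1)) + S.card ≤ wmax * T + n := by omega
        _ < (1 + n + T) * wmax := by nlinarith
        _ = M * wmax := by rw [hM]
    have hpos : 0 < M * wmax := by
      have : 0 < M := by omega
      exact Nat.mul_pos this hwmax
    rw [hsum, Nat.mul_add_div hpos, Nat.div_eq_of_lt hrem, add_zero]
  refine ⟨key, ?_⟩
  intro S ⟨hSt, hmax⟩ S' hS't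
  have := hmax S' hS't
  rw [key S, key S']
  exact Nat.div_le_div_right this
end

section
/- Distinctness after tie-breaking: with p'_i = (p_i·M + i)·w_max + 1 and M = 1 + n + Σ_{i=1}^n i, all modified profits p'_i are pairwise distinct, and all modified efficiencies p'_i/w_i are pairwise distinct (assuming 1 ≤ w_i ≤ w_max for all i). -/
lemma mod_eq_of_bounds {a b m : ℕ} (ha1 : 1 ≤ a) (ha2 : a ≤ m) (hb1 : 1 ≤ b)
    (hb2 : b ≤ m) (h : a % m = b % m) : a = b := by
  rcases eq_or_lt_of_le ha2 with h1 | h1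
  · rcases eq_or_lt_of_le hb2 with h2 | h2
    · omega
    · rw [h1, Nat.mod_self, Nat.mod_eq_of_lt h2] at h; omega
  · rcases eq_or_lt_of_le hb2 with h2 | h2
    · rw [h2, Nat.mod_self, Nat.mod_eq_of_lt h1] at h; omega
    · rwa [Nat.mod_eq_of_lt h1, Nat.mod_eq_of_lt h2] at h

/-- Distinctness after tie-breaking: with `p' i = (p i · M + i) · wmax + 1` and
`M = 1 + n + Σ_{i=1}^n i`, all modified profits `p' i` are pairwise distinct, and all
modified efficiencies `p' i / w i` are pairwise distinct. -/
theorem tie_breaking_distinctness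
    (n : ℕ) (w p : Fin n → ℕ) (wmax : ℕ)
    (hwmax : 1 ≤ wmax) (hw : ∀ i, 1 ≤ w i ∧ w i ≤ wmax) (hp : ∀ i, 1 ≤ p i)
    (M : ℕ) (hM : M = 1 + n + ∑ i ∈ Finset.Icc 1 n, i)
    (p' : Fin n → ℕ) (hp' : ∀ i, p' i = (p i * M + (i.val + 1)) * wmax + 1) :
    ∀ i j : Fin n, i ≠ j →
      p' i ≠ p' j ∧ (p' i : ℚ) / (w i : ℚ) ≠ (p' j : ℚ) / (w j : ℚ) := by
  intro i j hij
  have hiM : i.val + 1 < M := by have := i.isLt; omega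
  have hjM : j.val + 1 < M := by have := j.isLt; omega
  have hne : p' i ≠ p' j := by
    intro h
    rw [hp' i, hp' j] at h
    have h0 : (p i * M + (i.val + 1)) * wmax = (p j * M + (j.val + 1)) * wmax := by omega
    have h2 : p i * M + (i.val + 1) = p j * M + (j.val + 1) :=
      Nat.eq_of_mul_eq_mul_right (by omega) h0
    have h3 : (p i * M + (i.val + 1)) % M = (p j * M + (j.val + 1)) % M := by rw [h2]
    rw [Nat.mul_add_mod', Nat.mul_add_mod', Nat.mod_eq_of_lt hiM, Nat.mod_eq_of_lt hjM] at h3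
    exact hij (Fin.ext (by omega))
  refine ⟨hne, fun h => ?_⟩
  have hwi := hw i
  have hwj := hw j
  have hwi0 : (w i : ℚ) ≠ 0 := Nat.cast_ne_zero.mpr (by omega)
  have hwj0 : (w j : ℚ) ≠ 0 := Nat.cast_ne_zero.mpr (by omega)
  rw [div_eq_div_iff (by positivity) (by positivity)] at h
  have hcross : p' i * w j = p' j * w i := by exact_mod_cast h
  have e1 : p' i ≡ 1 [MOD wmax] := by
    show p' i % wmax = 1 % wmax
    rw [hp' i, Nat.mul_add_mod']
  have e2 : p' j ≡ 1 [MOD wmax] := by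
    show p' j % wmax = 1 % wmax
    rw [hp' j, Nat.mul_add_mod']
  have h1 : w j ≡ w i [MOD wmax] := by
    calc w j = 1 * w j := (one_mul _).symm
    _ ≡ p' i * w j [MOD wmax] := (e1.mul_right _).symm
    _ = p' j * w i := hcross
    _ ≡ 1 * w i [MOD wmax] := e2.mul_right _
    _ = w i := one_mul _
  have hw_eq : w j = w i := mod_eq_of_bounds hwj.1 hwj.2 hwi.1 hwi.2 h1
  rw [hw_eq] at hcross
  exact hne (Nat.eq_of_mul_eq_mul_right (by omega) hcross)
end
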